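/- arXiv:1108.5262 — 4 statements merged into one kernel-verified Lean document; each statement's English description precedes it below -/
import Mathlib

section
/- Let ρ:[0,1]→[0,1] be continuous and nondecreasing and let the threshold collection be t_k = ρ(k/m), 1 ≤ k ≤ m. For any realization of p-values p_1,…,p_m ∈ [0,1] and any λ ∈ {1,…,m}, let k̂ be the step-up-down index of order λ, and let Ĝ_m(x) = m^{-1} Σ_{i=1}^m 1{p_i ≤ x} be the empirical c.d.f. of the p-values. Then U(λ/m, Ĝ_m) ≤ k̂/m ≤ U(λ/m, (Ĝ_m + 1/m) ∧ 1). -/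
open MeasureTheory ProbabilityTheory Filter
open scoped ENNReal

noncomputable section

/-- The number of indices `i` with `p i ≤ x` (the p-values are `p 0, …, p (m-1)`). -/
def numLe {m : ℕ} (p : Fin m → ℝ) (x : ℝ) : ℕ :=
  Set.ncard {i : Fin m | p i ≤ x}

/-- The number of indices `i` among the true nulls (the first `m0` coordinates)
with `p i ≤ x`. -/
def numLeNull {m : ℕ} (m0 : ℕ) (p : Fin m → ℝ) (x : ℝ) : ℕ :=
  Set.ncard {i : Fin m | (i : ℕ) < m0 ∧ p i ≤ x}

/-- The step-up-down index `k̂` of order `lam` for the threshold collection `t`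
(the condition "`p_(k) ≤ t k`" on the `k`-th order statistic, with the conventions
`p_(0) = 0` and `t 0 = 0`, is encoded as `k ≤ numLe p (t k)`). -/
def sudIndex (lam : ℕ) (t : ℕ → ℝ) {m : ℕ} (p : Fin m → ℝ) : ℕ :=
  if lam ≤ numLe p (t lam) then
    sSup {k | k ≤ m ∧ ∀ k', lam ≤ k' → k' ≤ k → k' ≤ numLe p (t k')}
  else
    sSup {k | k ≤ lam ∧ k ≤ numLe p (t k)}

/-- The number of rejections of the procedure `SUD_lam(t)`: hypothesis `i` is rejected
iff `p i ≤ t k̂`. -/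
def sudNumRej (lam : ℕ) (t : ℕ → ℝ) {m : ℕ} (p : Fin m → ℝ) : ℕ :=
  numLe p (t (sudIndex lam t p))

/-- The number of erroneous rejections (type I errors) of `SUD_lam(t)` when the true
nulls are the first `m0` hypotheses. -/
def sudNumFalseRej (m0 lam : ℕ) (t : ℕ → ℝ) {m : ℕ} (p : Fin m → ℝ) : ℕ :=
  numLeNull m0 p (t (sudIndex lam t p))

/-- The false discovery proportion of `SUD_lam(t)`. -/
def sudFDP (m0 lam : ℕ) (t : ℕ → ℝ) {m : ℕ} (p : Fin m → ℝ) : ℝ :=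
  (sudNumFalseRej m0 lam t p : ℝ) / max (sudNumRej lam t p : ℝ) 1

/-- The false discovery rate of `SUD_lam(t)` (fixed number `m0` of true nulls). -/
def sudFDR {Ω : Type*} [MeasurableSpace Ω] (P : Measure Ω) (m0 lam : ℕ) (t : ℕ → ℝ)
    {m : ℕ} (p : Ω → Fin m → ℝ) : ℝ :=
  ∫ ω, sudFDP m0 lam t (p ω) ∂P

/-- The false discovery rate of `SUD_lam(t)` with a random number `M0` of true nulls. -/
def sudFDRrm {Ω : Type*} [MeasurableSpace Ω] (P : Measure Ω) (M0 : Ω → ℕ) (lam : ℕ)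
    (t : ℕ → ℝ) {m : ℕ} (p : Ω → Fin m → ℝ) : ℝ :=
  ∫ ω, sudFDP (M0 ω) lam t (p ω) ∂P

/-- A continuous c.d.f. on `[0,1]` (the class `𝓕`). -/
def IsCDF (F : ℝ → ℝ) : Prop :=
  ContinuousOn F (Set.Icc 0 1) ∧ MonotoneOn F (Set.Icc 0 1) ∧
    (∀ x ∈ Set.Icc (0:ℝ) 1, F x ∈ Set.Icc (0:ℝ) 1) ∧ F 1 = 1

/-- A (not necessarily continuous) c.d.f. on `[0,1]`. -/
def IsCDFw (F : ℝ → ℝ) : Prop :=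
  MonotoneOn F (Set.Icc 0 1) ∧ (∀ x ∈ Set.Icc (0:ℝ) 1, F x ∈ Set.Icc (0:ℝ) 1) ∧ F 1 = 1

/-- `μ` is a probability distribution on `[0,1]` with c.d.f. `F`. -/
def HasCDF (μ : Measure ℝ) (F : ℝ → ℝ) : Prop :=
  IsProbabilityMeasure μ ∧ μ (Set.Iio 0) = 0 ∧
    ∀ x ∈ Set.Icc (0:ℝ) 1, μ (Set.Iic x) = ENNReal.ofReal (F x)

/-- The fixed (two-group) mixture model `FM(m, m0, F)`: the p-values
`p · 0, …, p · (m-1)` are mutually independent, `[0,1]`-valued, the first `m0` of them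
(the true nulls) are uniform on `(0,1)` and the remaining ones have c.d.f. `F`.
The Dirac-uniform configuration `DU(m, m0)` is the case `F ≡ 1`. -/
def IsFM {Ω : Type*} [MeasurableSpace Ω] (P : Measure Ω) (m m0 : ℕ) (F : ℝ → ℝ)
    (p : Ω → Fin m → ℝ) : Prop :=
  IsProbabilityMeasure P ∧ (∀ i, Measurable fun ω => p ω i) ∧
    iIndepFun (fun i ω => p ω i) P ∧
    (∀ ω i, p ω i ∈ Set.Icc (0:ℝ) 1) ∧
    (∀ i : Fin m, (i : ℕ) < m0 → ∀ x ∈ Set.Icc (0:ℝ) 1,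
      P {ω | p ω i ≤ x} = ENNReal.ofReal x) ∧
    (∀ i : Fin m, m0 ≤ (i : ℕ) → ∀ x ∈ Set.Icc (0:ℝ) 1,
      P {ω | p ω i ≤ x} = ENNReal.ofReal (F x))

/-- The random (two-group) mixture model `RM(m, π0, F)`: the (unobserved) number `M0`
of true nulls is binomial `B(m, π0)` and, conditionally on `M0 = k`, the p-values
follow the fixed mixture model `FM(m, k, F)`. -/
def IsRM {Ω : Type*} [MeasurableSpace Ω] (P : Measure Ω) (m : ℕ) (pi0 : ℝ) (F : ℝ → ℝ)
    (p : Ω → Fin m → ℝ) (M0 : Ω → ℕ) : Prop :=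
  IsProbabilityMeasure P ∧ Measurable M0 ∧
    (∀ k : ℕ, P {ω | M0 ω = k} =
      ENNReal.ofReal ((m.choose k : ℝ) * pi0 ^ k * (1 - pi0) ^ (m - k))) ∧
    (∀ k ≤ m, P {ω | M0 ω = k} ≠ 0 → IsFM (P[|{ω | M0 ω = k}]) m k F p)

/-- The quantity `𝒰(t0, G)` associated with the critical value function `ρ`. -/
def Ufix (ρ : ℝ → ℝ) (t0 : ℝ) (G : ℝ → ℝ) : ℝ :=
  if t0 ≤ G (ρ t0) then sInf {u | u ∈ Set.Icc t0 1 ∧ G (ρ u) ≤ u}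
  else sSup {u | u ∈ Set.Icc 0 t0 ∧ u ≤ G (ρ u)}

/-- `u⁺_δ = 𝒰(l, (G^{DU}_ζ + δ) ∧ 1)` where `G^{DU}_ζ(x) = (1-ζ) + ζx`. -/
def uPlusDU (ρ : ℝ → ℝ) (l ζ δ : ℝ) : ℝ :=
  Ufix ρ l fun x => min ((1 - ζ) + ζ * x + δ) 1

/-- `u⁻_δ = 𝒰(l, (G^{DU}_ζ - δ) ∨ 0)` where `G^{DU}_ζ(x) = (1-ζ) + ζx`. -/
def uMinusDU (ρ : ℝ → ℝ) (l ζ δ : ℝ) : ℝ :=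
  Ufix ρ l fun x => max ((1 - ζ) + ζ * x - δ) 0

/-- The remainder term `ε(δ, m, ζ, y)`. -/
def epsBound (ρ : ℝ → ℝ) (l δ : ℝ) (m : ℕ) (ζ y : ℝ) : ℝ :=
  (ρ (uPlusDU ρ l ζ δ) - ρ (uMinusDU ρ l ζ δ)) / uPlusDU ρ l ζ δ +
    4 / (1 - ζ) *
      Real.exp (-2 * m * max (δ - y - 1 / m) 0 ^ 2 * max (1 - y / ζ) 0)

/-- The uniform distribution on `(0,1)`. -/
def unifMeasure : Measure ℝ := volume.restrict (Set.Ioo 0 1)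

/-- `Ψ_{k,k0,F}(s 1, …, s k) = P(U_(1) ≤ s 1, …, U_(k) ≤ s k)`, where
`U_1, …, U_{k0}` are i.i.d. uniform on `(0,1)`, independent of `U_{k0+1}, …, U_k`
which are i.i.d. with distribution `μ` (of c.d.f. `F`); the condition
"`U_(j) ≤ s j`" on the `j`-th order statistic is encoded as `j ≤ numLe U (s j)`. -/
def Psi (k k0 : ℕ) (μ : Measure ℝ) (s : ℕ → ℝ) : ℝ :=
  ((Measure.pi fun i : Fin k => if (i : ℕ) < k0 then unifMeasure else μ)
    {U : Fin k → ℝ | ∀ j : ℕ, 1 ≤ j → j ≤ k → j ≤ numLe U (s j)}).toReal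

/-- The one-population quantity `Ψ_k(s 1, …, s k)` (all variables uniform). -/
def Psi1 (k : ℕ) (s : ℕ → ℝ) : ℝ := Psi k k unifMeasure s

/-- The quantity `𝒬_{m,m0,F}(s, k, j)`, where `ν` is a distribution with
c.d.f. `F̄(u) = 1 - F(1-u)`. -/
def Qcal (m m0 : ℕ) (F : ℝ → ℝ) (ν : Measure ℝ) (s : ℕ → ℝ) (k j : ℕ) : ℝ :=
  (m0.choose j : ℝ) * ((m - m0).choose (k - j) : ℝ) * s k ^ j * F (s k) ^ (k - j) *
    Psi (m - k) (m0 - j) ν fun i => 1 - s (m + 1 - i)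

/-- The quantity `𝒬̃_{m,m0,F}(s, k, j)`, where `μ` is a distribution with c.d.f. `F`. -/
def Qtild (m m0 : ℕ) (F : ℝ → ℝ) (μ : Measure ℝ) (s : ℕ → ℝ) (k j : ℕ) : ℝ :=
  (m0.choose j : ℝ) * ((m - m0).choose (k - j) : ℝ) * (1 - s (k + 1)) ^ (m0 - j) *
    (1 - F (s (k + 1))) ^ ((m - m0) - (k - j)) * Psi k j μ s

/-- The quantity `𝒫_{m,π0,F}(s, k, j)` (with `G = π0 · id + (1-π0) F`). -/
def Pcal (m : ℕ) (pi0 : ℝ) (F : ℝ → ℝ) (s : ℕ → ℝ) (k j : ℕ) : ℝ :=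
  (m.choose j : ℝ) * ((m - j).choose (k - j) : ℝ) * pi0 ^ j * (1 - pi0) ^ (k - j) *
    s k ^ j * F (s k) ^ (k - j) *
    Psi1 (m - k) fun i => 1 - (pi0 * s (m + 1 - i) + (1 - pi0) * F (s (m + 1 - i)))

/-- The quantity `𝒫̃_{m,π0,F}(s, k, j)`, where `μ` is a distribution with c.d.f. `F`. -/
def Ptild (m : ℕ) (pi0 : ℝ) (F : ℝ → ℝ) (μ : Measure ℝ) (s : ℕ → ℝ) (k j : ℕ) : ℝ :=
  (m.choose j : ℝ) * ((m - j).choose (k - j) : ℝ) * pi0 ^ j * (1 - pi0) ^ (k - j) *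
    (1 - (pi0 * s (k + 1) + (1 - pi0) * F (s (k + 1)))) ^ (m - k) * Psi k j μ s

/-! Write `N k = m Ĝ_m(t_k)`, so that the `k`-th test of the procedure reads `k ≤ N k`, and
note that `u ↦ Ĝ_m(ρ u)` is nondecreasing on `[0,1]`. In the step-up case every
`u ∈ (k̂/m, (k̂+1)/m]` lies below the diagonal, since `Ĝ_m(ρ u) ≤ N (k̂+1) / m ≤ k̂/m < u`; and a
point `u < k̂/m` with `Ĝ_m(ρ u) + 1/m ≤ u` would give, for `k = ⌊m u⌋`,
`k/m ≤ Ĝ_m(ρ u) ≤ u - 1/m < k/m`. The step-down case is the mirror image, with `⌈m u⌉`. -/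

open Set

lemma numLe_le_card {m : ℕ} (p : Fin m → ℝ) (x : ℝ) : numLe p x ≤ m := by
  simpa only [numLe, Nat.card_eq_fintype_card, Fintype.card_fin] using
    Set.ncard_le_card {i | p i ≤ x}

lemma numLe_mono {m : ℕ} (p : Fin m → ℝ) : Monotone (numLe p) :=
  fun _ _ hxy => Set.ncard_le_ncard (fun _ hi => le_trans hi hxy) (Set.toFinite _)

lemma natCast_div_mem_Icc {k m : ℕ} (hkm : k ≤ m) : (k : ℝ) / m ∈ Icc (0 : ℝ) 1 :=
  ⟨by positivity, div_le_one_of_le₀ (by exact_mod_cast hkm) (Nat.cast_nonneg m)⟩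

section sudIndex

variable {lam m : ℕ} {t : ℕ → ℝ} {p : Fin m → ℝ}

lemma isGreatest_sudIndex_of_le (hlam : lam ≤ m) (h : lam ≤ numLe p (t lam)) :
    IsGreatest {k | k ≤ m ∧ ∀ k', lam ≤ k' → k' ≤ k → k' ≤ numLe p (t k')}
      (sudIndex lam t p) := by
  have hbdd : BddAbove {k | k ≤ m ∧ ∀ k', lam ≤ k' → k' ≤ k → k' ≤ numLe p (t k')} :=
    ⟨m, fun _ hk => hk.1⟩
  rw [sudIndex, if_pos h]
  exact ⟨Nat.sSup_mem ⟨lam, hlam, fun k' h₁ h₂ => le_antisymm h₂ h₁ ▸ h⟩ hbdd,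
    fun _ hk => le_csSup hbdd hk⟩

lemma isGreatest_sudIndex_of_not_le (h : ¬ lam ≤ numLe p (t lam)) :
    IsGreatest {k | k ≤ lam ∧ k ≤ numLe p (t k)} (sudIndex lam t p) := by
  have hbdd : BddAbove {k | k ≤ lam ∧ k ≤ numLe p (t k)} := ⟨lam, fun _ hk => hk.1⟩
  rw [sudIndex, if_neg h]
  exact ⟨Nat.sSup_mem ⟨0, Nat.zero_le _, Nat.zero_le _⟩ hbdd, fun _ hk => le_csSup hbdd hk⟩

lemma le_sudIndex_of_le (hlam : lam ≤ m) (h : lam ≤ numLe p (t lam)) :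
    lam ≤ sudIndex lam t p :=
  (isGreatest_sudIndex_of_le hlam h).2 ⟨hlam, fun _ h₁ h₂ => le_antisymm h₂ h₁ ▸ h⟩

lemma sudIndex_le_card (hlam : lam ≤ m) : sudIndex lam t p ≤ m := by
  by_cases h : lam ≤ numLe p (t lam)
  · exact (isGreatest_sudIndex_of_le hlam h).1.1
  · exact (isGreatest_sudIndex_of_not_le h).1.1.trans hlam

lemma le_numLe_of_le_sudIndex (hlam : lam ≤ m) (h : lam ≤ numLe p (t lam)) {k : ℕ}
    (hk : lam ≤ k) (hk' : k ≤ sudIndex lam t p) : k ≤ numLe p (t k) :=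
  (isGreatest_sudIndex_of_le hlam h).1.2 k hk hk'

lemma numLe_succ_sudIndex_le (hlam : lam ≤ m) (h : lam ≤ numLe p (t lam))
    (hk : sudIndex lam t p < m) : numLe p (t (sudIndex lam t p + 1)) ≤ sudIndex lam t p := by
  have hgr := isGreatest_sudIndex_of_le hlam h
  by_contra! hlt
  refine absurd (hgr.2 ⟨hk, fun k' h₁ h₂ => ?_⟩) (Nat.not_succ_le_self _)
  rcases Nat.lt_or_ge k' (sudIndex lam t p + 1) with hk' | hk'
  · exact hgr.1.2 k' h₁ (Nat.lt_succ_iff.mp hk')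
  · rw [le_antisymm h₂ hk']
    exact hlt

lemma sudIndex_le_of_not_le (h : ¬ lam ≤ numLe p (t lam)) : sudIndex lam t p ≤ lam :=
  (isGreatest_sudIndex_of_not_le h).1.1

lemma sudIndex_le_numLe_of_not_le (h : ¬ lam ≤ numLe p (t lam)) :
    sudIndex lam t p ≤ numLe p (t (sudIndex lam t p)) :=
  (isGreatest_sudIndex_of_not_le h).1.2

lemma numLe_lt_of_sudIndex_lt (h : ¬ lam ≤ numLe p (t lam)) {k : ℕ}
    (hk : sudIndex lam t p < k) (hk' : k ≤ lam) : numLe p (t k) < k := by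
  by_contra! hle
  exact absurd ((isGreatest_sudIndex_of_not_le h).2 ⟨hk', hle⟩) (not_le.mpr hk)

end sudIndex

section Ufix

variable {ρ G : ℝ → ℝ} {t₀ x : ℝ}

lemma le_Ufix_of_le (h : t₀ ≤ G (ρ t₀)) (ht₀ : t₀ ≤ 1) (h₁ : G (ρ 1) ≤ 1)
    (hx : ∀ u ∈ Icc t₀ 1, G (ρ u) ≤ u → x ≤ u) : x ≤ Ufix ρ t₀ G := by
  rw [Ufix, if_pos h]
  exact le_csInf ⟨1, ⟨ht₀, le_rfl⟩, h₁⟩ fun u hu => hx u hu.1 hu.2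

lemma Ufix_le_of_mem (h : t₀ ≤ G (ρ t₀)) (hx : x ∈ Icc t₀ 1) (hGx : G (ρ x) ≤ x) :
    Ufix ρ t₀ G ≤ x := by
  rw [Ufix, if_pos h]
  exact csInf_le ⟨t₀, fun _ hu => hu.1.1⟩ ⟨hx, hGx⟩

lemma Ufix_le_of_Ioc_subset (h : t₀ ≤ G (ρ t₀)) {y : ℝ} (hx : t₀ ≤ x) (hxy : x < y)
    (hy : y ≤ 1) (hG : ∀ u ∈ Ioc x y, G (ρ u) ≤ u) : Ufix ρ t₀ G ≤ x := by
  rw [Ufix, if_pos h, ← csInf_Ioc hxy]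
  exact csInf_le_csInf ⟨t₀, fun _ hu => hu.1.1⟩ (nonempty_Ioc.mpr hxy)
    fun u hu => ⟨⟨hx.trans hu.1.le, hu.2.trans hy⟩, hG u hu⟩

lemma Ufix_le_of_not_le (h : ¬ t₀ ≤ G (ρ t₀)) (ht₀ : 0 ≤ t₀) (h₀ : 0 ≤ G (ρ 0))
    (hx : ∀ u ∈ Icc 0 t₀, u ≤ G (ρ u) → u ≤ x) : Ufix ρ t₀ G ≤ x := by
  rw [Ufix, if_neg h]
  exact csSup_le ⟨0, ⟨le_rfl, ht₀⟩, h₀⟩ fun u hu => hx u hu.1 hu.2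

lemma le_Ufix_of_mem (h : ¬ t₀ ≤ G (ρ t₀)) (hx : x ∈ Icc 0 t₀) (hGx : x ≤ G (ρ x)) :
    x ≤ Ufix ρ t₀ G := by
  rw [Ufix, if_neg h]
  exact le_csSup ⟨t₀, fun _ hu => hu.1.2⟩ ⟨hx, hGx⟩

end Ufix

section sandwich

variable {m lam : ℕ} {ρ : ℝ → ℝ} (p : Fin m → ℝ)

lemma Ufix_le_sudIndex_of_le (hm : 0 < m) (hρ : MonotoneOn ρ (Icc 0 1)) (hlam : lam ≤ m)
    (h : lam ≤ numLe p (ρ ((lam : ℝ) / m))) :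
    Ufix ρ ((lam : ℝ) / m) (fun x => (numLe p x : ℝ) / m) ≤
      (sudIndex lam (fun k => ρ ((k : ℝ) / m)) p : ℝ) / m := by
  set khat := sudIndex lam (fun k => ρ ((k : ℝ) / m)) p
  have hm₀ : (0 : ℝ) < m := Nat.cast_pos.mpr hm
  have hup : (lam : ℝ) / m ≤ (numLe p (ρ ((lam : ℝ) / m)) : ℝ) / m := by gcongr
  have hkhat : khat ≤ m := sudIndex_le_card hlam
  rcases hkhat.eq_or_lt with hkhat | hkhat
  · rw [hkhat, div_self hm₀.ne']
    refine Ufix_le_of_mem hup ⟨(natCast_div_mem_Icc hlam).2, le_rfl⟩ ?_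
    exact div_le_one_of_le₀ (by exact_mod_cast numLe_le_card p _) hm₀.le
  · have hy := natCast_div_mem_Icc (Nat.succ_le_of_lt hkhat)
    have hN := numLe_succ_sudIndex_le hlam h hkhat
    refine Ufix_le_of_Ioc_subset hup (y := ((khat + 1 : ℕ) : ℝ) / m)
      (by gcongr; exact_mod_cast le_sudIndex_of_le hlam h)
      (by gcongr; exact_mod_cast khat.lt_succ_self) hy.2 fun u ⟨hxu, huy⟩ => ?_
    have hu : u ∈ Icc (0 : ℝ) 1 := ⟨(natCast_div_mem_Icc hkhat.le).1.trans hxu.le, huy.trans hy.2⟩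
    calc (numLe p (ρ u) : ℝ) / m ≤ (numLe p (ρ (((khat + 1 : ℕ) : ℝ) / m)) : ℝ) / m := by
          gcongr; exact_mod_cast numLe_mono p (hρ hu hy huy)
      _ ≤ (khat : ℝ) / m := by gcongr
      _ ≤ u := hxu.le

lemma Ufix_le_sudIndex_of_not_le (hm : 0 < m) (hρ : MonotoneOn ρ (Icc 0 1)) (hlam : lam ≤ m)
    (h : ¬ lam ≤ numLe p (ρ ((lam : ℝ) / m))) :
    Ufix ρ ((lam : ℝ) / m) (fun x => (numLe p x : ℝ) / m) ≤
      (sudIndex lam (fun k => ρ ((k : ℝ) / m)) p : ℝ) / m := by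
  set khat := sudIndex lam (fun k => ρ ((k : ℝ) / m)) p
  have hm₀ : (0 : ℝ) < m := Nat.cast_pos.mpr hm
  have hdown : ¬ (lam : ℝ) / m ≤ (numLe p (ρ ((lam : ℝ) / m)) : ℝ) / m := by
    rwa [div_le_div_iff_of_pos_right hm₀, Nat.cast_le]
  refine Ufix_le_of_not_le hdown (by positivity) (by positivity) fun u ⟨hu₀, hu⟩ hGu => ?_
  by_contra! hlt
  set k := ⌈u * m⌉₊
  have hk : k ≤ lam := Nat.ceil_le.mpr ((le_div_iff₀ hm₀).mp hu)
  have hkhat : khat < k := by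
    exact_mod_cast ((div_lt_iff₀ hm₀).mp hlt).trans_le (Nat.le_ceil (u * m))
  have hN : (numLe p (ρ ((k : ℝ) / m)) : ℝ) ≤ k - 1 := by
    rw [le_sub_iff_add_le]
    exact_mod_cast numLe_lt_of_sudIndex_lt h hkhat hk
  have huk : u ≤ (k : ℝ) / m := (le_div_iff₀ hm₀).mpr (Nat.le_ceil _)
  have hkm := natCast_div_mem_Icc (hk.trans hlam)
  have hceil : (k : ℝ) < u * m + 1 := Nat.ceil_lt_add_one (by positivity)
  have : u < u := calc
    u ≤ (numLe p (ρ u) : ℝ) / m := hGu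
    _ ≤ (numLe p (ρ ((k : ℝ) / m)) : ℝ) / m := by
      gcongr; exact_mod_cast numLe_mono p (hρ ⟨hu₀, huk.trans hkm.2⟩ hkm huk)
    _ ≤ ((k : ℝ) - 1) / m := by gcongr
    _ < u := by rw [div_lt_iff₀ hm₀]; linarith
  exact lt_irrefl u this

lemma sudIndex_le_of_min_le (hm : 0 < m) (hρ : MonotoneOn ρ (Icc 0 1)) (hlam : lam ≤ m)
    (h : lam ≤ numLe p (ρ ((lam : ℝ) / m))) {u : ℝ} (hu : u ∈ Icc ((lam : ℝ) / m) 1)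
    (hGu : min ((numLe p (ρ u) : ℝ) / m + 1 / m) 1 ≤ u) :
    (sudIndex lam (fun k => ρ ((k : ℝ) / m)) p : ℝ) / m ≤ u := by
  set khat := sudIndex lam (fun k => ρ ((k : ℝ) / m)) p
  have hm₀ : (0 : ℝ) < m := Nat.cast_pos.mpr hm
  rcases min_le_iff.mp hGu with hGu | hu₁
  · by_contra! hlt
    have hu₀ : 0 ≤ u := (natCast_div_mem_Icc hlam).1.trans hu.1
    set k := ⌊u * m⌋₊
    have hk : lam ≤ k := Nat.le_floor ((div_le_iff₀ hm₀).mp hu.1)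
    have hkhat : k < khat := (Nat.floor_lt (by positivity)).mpr ((lt_div_iff₀ hm₀).mp hlt)
    have hN := le_numLe_of_le_sudIndex hlam h hk hkhat.le
    have hku : (k : ℝ) / m ≤ u := (div_le_iff₀ hm₀).mpr (Nat.floor_le (by positivity))
    have hkm := natCast_div_mem_Icc (hkhat.le.trans (sudIndex_le_card hlam))
    have hfloor : u * m < k + 1 := Nat.lt_floor_add_one _
    have : u < u := calc
      u < (k : ℝ) / m + 1 / m := by rw [← add_div, lt_div_iff₀ hm₀]; exact hfloor
      _ ≤ (numLe p (ρ ((k : ℝ) / m)) : ℝ) / m + 1 / m := by gcongr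
      _ ≤ (numLe p (ρ u) : ℝ) / m + 1 / m := by
        gcongr; exact_mod_cast numLe_mono p (hρ hkm ⟨hu₀, hu.2⟩ hku)
      _ ≤ u := hGu
    exact lt_irrefl u this
  · exact (natCast_div_mem_Icc (sudIndex_le_card hlam)).2.trans hu₁

lemma sudIndex_le_Ufix (hm : 0 < m) (hρ : MonotoneOn ρ (Icc 0 1)) (hlam : lam ≤ m) :
    (sudIndex lam (fun k => ρ ((k : ℝ) / m)) p : ℝ) / m ≤
      Ufix ρ ((lam : ℝ) / m) (fun x => min ((numLe p x : ℝ) / m + 1 / m) 1) := by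
  have hm₀ : (0 : ℝ) < m := Nat.cast_pos.mpr hm
  have hlam₁ := natCast_div_mem_Icc hlam
  by_cases hG : (lam : ℝ) / m ≤ min ((numLe p (ρ ((lam : ℝ) / m)) : ℝ) / m + 1 / m) 1
  · refine le_Ufix_of_le hG hlam₁.2 (min_le_right _ _) fun u hu hGu => ?_
    by_cases h : lam ≤ numLe p (ρ ((lam : ℝ) / m))
    · exact sudIndex_le_of_min_le p hm hρ hlam h hu hGu
    · exact le_trans (by gcongr; exact sudIndex_le_of_not_le h) hu.1
  · have h : ¬ lam ≤ numLe p (ρ ((lam : ℝ) / m)) := fun h => hG <| le_min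
      (le_add_of_le_of_nonneg (by gcongr) (by positivity)) hlam₁.2
    refine le_Ufix_of_mem hG ⟨by positivity, by gcongr; exact sudIndex_le_of_not_le h⟩
      (le_min (le_add_of_le_of_nonneg ?_ (by positivity)) ?_)
    · gcongr
      exact sudIndex_le_numLe_of_not_le h
    · exact (natCast_div_mem_Icc (sudIndex_le_card hlam)).2

end sandwich

theorem sudIndex_between_Ufix_general
    (m : ℕ) (hm : 2 ≤ m)
    (ρ : ℝ → ℝ)
    (hρmono : MonotoneOn ρ (Set.Icc 0 1))
    (lam : ℕ) (hlam : 1 ≤ lam ∧ lam ≤ m)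
    (p : Fin m → ℝ) :
    Ufix ρ ((lam : ℝ) / m) (fun x => (numLe p x : ℝ) / m) ≤
        (sudIndex lam (fun k => ρ ((k : ℝ) / m)) p : ℝ) / m ∧
      (sudIndex lam (fun k => ρ ((k : ℝ) / m)) p : ℝ) / m ≤
        Ufix ρ ((lam : ℝ) / m) (fun x => min ((numLe p x : ℝ) / m + 1 / m) 1) := by
  have hm₀ : 0 < m := by omega
  refine ⟨?_, sudIndex_le_Ufix p hm₀ hρmono hlam.2⟩
  by_cases h : lam ≤ numLe p (ρ ((lam : ℝ) / m))
  · exact Ufix_le_sudIndex_of_le p hm₀ hρmono hlam.2 h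
  · exact Ufix_le_sudIndex_of_not_le p hm₀ hρmono hlam.2 h

/-- Lemma: the SUD index `k̂` is sandwiched between `𝒰(λ/m, Ĝ_m)` and
`𝒰(λ/m, (Ĝ_m + 1/m) ∧ 1)`, where `Ĝ_m` is the empirical c.d.f. of the p-values. -/
theorem sudIndex_between_Ufix
    (m : ℕ) (hm : 2 ≤ m)
    (ρ : ℝ → ℝ) (hρcont : ContinuousOn ρ (Set.Icc 0 1))
    (hρmono : MonotoneOn ρ (Set.Icc 0 1))
    (hρmap : ∀ x ∈ Set.Icc (0:ℝ) 1, ρ x ∈ Set.Icc (0:ℝ) 1)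
    (lam : ℕ) (hlam : 1 ≤ lam ∧ lam ≤ m)
    (p : Fin m → ℝ) (hp : ∀ i, p i ∈ Set.Icc (0:ℝ) 1) :
    Ufix ρ ((lam : ℝ) / m) (fun x => (numLe p x : ℝ) / m) ≤
        (sudIndex lam (fun k => ρ ((k : ℝ) / m)) p : ℝ) / m ∧
      (sudIndex lam (fun k => ρ ((k : ℝ) / m)) p : ℝ) / m ≤
        Ufix ρ ((lam : ℝ) / m) (fun x => min ((numLe p x : ℝ) / m + 1 / m) 1) :=
  sudIndex_between_Ufix_general m hm ρ hρmono lam hlam p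
end
end

section
/- Let m ≥ 1 and m_0 ∈ {0,…,m}. Let p = (p_1,…,p_m) be a family of [0,1]-valued random variables such that p_1,…,p_{m_0} are mutually independent and each satisfies P(p_i ≤ x) ≤ x for all x ∈ [0,1] (stochastically lower bounded by a uniform variable); no assumption is made on p_{m_0+1},…,p_m beyond joint measurability. Let δ be a multiple testing procedure rejecting exactly the hypotheses i with p_i ≤ t*(p), where t* : [0,1]^m → [0,1] is nonincreasing in each coordinate. Let V_m(p) = |{i ≤ m_0 : p_i ≤ t*(p)}| and let φ : ℕ → ℝ be nondecreasing. Then E_P[φ(V_m(p))] ≤ E_{DU(m,m_0)}[φ(V_m(p))], where DU(m,m_0) is the distribution under which p_1,…,p_{m_0} are i.i.d. uniform on (0,1) and p_{m_0+1} = … = p_m = 0 almost surely. -/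
open MeasureTheory ProbabilityTheory Filter
open scoped ENNReal

noncomputable section

/-! Lowering a p-value can only raise the threshold `t*`, hence the number of rejected true nulls.
So setting every false-null p-value to `0` increases `V_m`, which then becomes a nonincreasing
function of the true-null p-values alone; under `DU(m, m0)` nothing changes, since those p-values
are already `0` almost surely. The true-null p-values are independent and stochastically larger
than uniform, and the expectation of a bounded nonincreasing function of independent coordinates
only grows when each coordinate is made stochastically smaller: by Fubini this reduces to one
coordinate, where the layer-cake formula reduces it to comparing the masses of lower sets. -/

open Set

section StochasticOrder

variable {μ ν : Measure ℝ}

lemma measure_Iio_le_of_measure_Iic_le (hμν : ∀ c, μ (Iic c) ≤ ν (Iic c)) (b : ℝ) :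
    μ (Iio b) ≤ ν (Iio b) := by
  have hlim : Tendsto (fun n : ℕ => b - 1 / ((n : ℝ) + 1)) atTop (nhds b) := by
    simpa using (tendsto_const_nhds (x := b)).sub tendsto_one_div_add_atTop_nhds_zero_nat
  have hmono : Monotone fun n : ℕ => Iic (b - 1 / ((n : ℝ) + 1)) := fun a c hac =>
    Iic_subset_Iic.2 <| sub_le_sub_left (Nat.one_div_le_one_div hac) b
  rw [← iUnion_Iic_eq_Iio_of_lt_of_tendsto (fun n => by simp; positivity) hlim,
    hmono.measure_iUnion, hmono.measure_iUnion]
  exact iSup_mono fun n => hμν _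

lemma IsLowerSet.measure_le_of_measure_Iic_le [IsProbabilityMeasure μ]
    [IsProbabilityMeasure ν] (hμν : ∀ c, μ (Iic c) ≤ ν (Iic c)) {L : Set ℝ}
    (hL : IsLowerSet L) : μ L ≤ ν L := by
  rcases L.eq_empty_or_nonempty with rfl | hne
  · simp
  by_cases hbdd : BddAbove L
  · have hlub : IsLUB L (sSup L) := isLUB_csSup hne hbdd
    have hL_eq : L = ⋃ x ∈ L, Iic x :=
      subset_antisymm (fun x hx => mem_biUnion hx self_mem_Iic)
        (iUnion₂_subset fun x hx _ hy => hL hy hx)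
    by_cases hmem : sSup L ∈ L
    · rw [hL_eq, hlub.biUnion_Iic_eq_Iic hmem]
      exact hμν _
    · rw [hL_eq, hlub.biUnion_Iic_eq_Iio hmem]
      exact measure_Iio_le_of_measure_Iic_le hμν _
  · have : L = univ := eq_univ_of_forall fun x =>
      let ⟨y, hy, hxy⟩ := not_bddAbove_iff.1 hbdd x; hL hxy.le hy
    simp [this]

lemma Antitone.lintegral_le_of_measure_Iic_le [IsProbabilityMeasure μ]
    [IsProbabilityMeasure ν] {f : ℝ → ℝ≥0∞} (hf : Antitone f)
    (hμν : ∀ c, μ (Iic c) ≤ ν (Iic c)) : ∫⁻ x, f x ∂μ ≤ ∫⁻ x, f x ∂ν := by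
  -- layer-cake formula for the truncations `min (f x) n`, whose superlevel sets are lower sets
  have htrunc : ∀ n : ℕ, ∫⁻ x, min (f x) n ∂μ ≤ ∫⁻ x, min (f x) n ∂ν := by
    intro n
    set g : ℝ → ℝ := fun x => (min (f x) n).toReal
    have hfin (x : ℝ) : min (f x) n ≠ ⊤ :=
      ne_top_of_le_ne_top (ENNReal.natCast_ne_top n) (min_le_right _ _)
    have hg : Antitone g := fun a b hab =>
      ENNReal.toReal_mono (hfin a) (min_le_min_right _ (hf hab))
    have hfg : ∀ x, min (f x) n = ENNReal.ofReal (g x) := fun x =>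
      (ENNReal.ofReal_toReal (hfin x)).symm
    have hlayer (κ : Measure ℝ) := lintegral_eq_lintegral_meas_le κ
      (Eventually.of_forall fun x => ENNReal.toReal_nonneg) hg.measurable.aemeasurable
    rw [lintegral_congr hfg, lintegral_congr hfg, hlayer μ, hlayer ν]
    exact lintegral_mono fun t =>
      IsLowerSet.measure_le_of_measure_Iic_le hμν fun a b hba ha => ha.trans (hg hba)
  have hsup : ∀ x, f x = ⨆ n : ℕ, min (f x) n := fun x => by
    rw [← inf_iSup_eq, ENNReal.iSup_natCast, inf_top_eq]
  have hmeas : ∀ n : ℕ, Measurable fun x => min (f x) n := fun n =>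
    hf.measurable.min measurable_const
  have hmono : Monotone fun (n : ℕ) x => min (f x) (n : ℝ≥0∞) := fun a b hab x =>
    min_le_min_left _ (by exact_mod_cast hab)
  calc ∫⁻ x, f x ∂μ = ⨆ n : ℕ, ∫⁻ x, min (f x) n ∂μ := by
        simp_rw [← lintegral_iSup hmeas hmono, ← hsup]
    _ ≤ ⨆ n : ℕ, ∫⁻ x, min (f x) n ∂ν := iSup_mono htrunc
    _ = ∫⁻ x, f x ∂ν := by simp_rw [← lintegral_iSup hmeas hmono, ← hsup]

end StochasticOrder

lemma Antitone.lintegral_pi_le_of_measure_Iic_le {n : ℕ} {μ ν : Fin n → Measure ℝ}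
    [∀ i, IsProbabilityMeasure (μ i)] [∀ i, IsProbabilityMeasure (ν i)]
    {f : (Fin n → ℝ) → ℝ≥0∞} (hf : Antitone f) (hfm : Measurable f)
    (hμν : ∀ i c, μ i (Iic c) ≤ ν i (Iic c)) :
    ∫⁻ x, f x ∂Measure.pi μ ≤ ∫⁻ x, f x ∂Measure.pi ν := by
  induction n with
  | zero => simp [lintegral_unique]
  | succ n ih =>
    have hsplit : ∀ (κ : Fin (n + 1) → Measure ℝ) [∀ i, IsProbabilityMeasure (κ i)],
        ∫⁻ x, f x ∂Measure.pi κ =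
          ∫⁻ x₀, ∫⁻ y, f (Fin.cons x₀ y) ∂Measure.pi (fun j => κ j.succ) ∂κ 0 := by
      intro κ _
      have he := (measurePreserving_piFinSuccAbove κ 0).symm
      rw [← he.lintegral_comp hfm,
        lintegral_prod (fun z => f ((MeasurableEquiv.piFinSuccAbove _ 0).symm z))
          (hfm.comp he.measurable).aemeasurable]
      simp [MeasurableEquiv.piFinSuccAbove_symm_apply, Fin.insertNthEquiv, Fin.insertNth_zero']
    have hcons_meas (x₀ : ℝ) :
        Measurable fun y : Fin n → ℝ => (Fin.cons x₀ y : Fin (n + 1) → ℝ) := by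
      fun_prop
    rw [hsplit μ, hsplit ν]
    calc ∫⁻ x₀, ∫⁻ y, f (Fin.cons x₀ y) ∂Measure.pi (fun j => μ j.succ) ∂μ 0
        ≤ ∫⁻ x₀, ∫⁻ y, f (Fin.cons x₀ y) ∂Measure.pi (fun j => ν j.succ) ∂μ 0 :=
          lintegral_mono fun x₀ =>
            ih (fun y y' hy => hf (Fin.cons_le_cons.2 ⟨le_rfl, hy⟩))
              (hfm.comp (hcons_meas x₀)) fun j => hμν j.succ
      _ ≤ ∫⁻ x₀, ∫⁻ y, f (Fin.cons x₀ y) ∂Measure.pi (fun j => ν j.succ) ∂ν 0 :=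
          Antitone.lintegral_le_of_measure_Iic_le
            (fun x₀ x₀' hx => lintegral_mono fun y => hf (Fin.cons_le_cons.2 ⟨hx, le_rfl⟩))
            (hμν 0)

theorem Antitone.integral_comp_le_of_iIndepFun {n : ℕ} {Ω Ω' : Type*} [MeasurableSpace Ω]
    [MeasurableSpace Ω'] {P : Measure Ω} {Q : Measure Ω'} [IsProbabilityMeasure P]
    [IsProbabilityMeasure Q] {X : Fin n → Ω → ℝ} {Y : Fin n → Ω' → ℝ}
    (hXm : ∀ i, Measurable (X i)) (hYm : ∀ i, Measurable (Y i))
    (hX : iIndepFun X P) (hY : iIndepFun Y Q)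
    (hXY : ∀ i c, P {ω | X i ω ≤ c} ≤ Q {ω | Y i ω ≤ c})
    {f : (Fin n → ℝ) → ℝ} (hf : Antitone f) (hfm : Measurable f) {C : ℝ}
    (hC : ∀ x, ‖f x‖ ≤ C) :
    ∫ ω, f (fun i => X i ω) ∂P ≤ ∫ ω, f (fun i => Y i ω) ∂Q := by
  have hint (κ : Measure (Fin n → ℝ)) [IsProbabilityMeasure κ] : Integrable f κ :=
    .of_bound hfm.aestronglyMeasurable C (ae_of_all _ hC)
  have hshift (κ : Measure (Fin n → ℝ)) [IsProbabilityMeasure κ] :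
      ∫ x, f x ∂κ = (∫⁻ x, ENNReal.ofReal (f x + C) ∂κ).toReal - C := by
    have hnonneg : 0 ≤ᵐ[κ] fun x => f x + C := ae_of_all _ fun x => show 0 ≤ f x + C by
      linarith [neg_abs_le (f x), (Real.norm_eq_abs (f x)).symm.trans_le (hC x)]
    rw [← integral_eq_lintegral_of_nonneg_ae hnonneg (hfm.add_const C).aestronglyMeasurable,
      integral_add (hint κ) (integrable_const C)]
    simp
  have := fun i => Measure.isProbabilityMeasure_map (μ := P) (hXm i).aemeasurable
  have := fun i => Measure.isProbabilityMeasure_map (μ := Q) (hYm i).aemeasurable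
  rw [← integral_map (measurable_pi_lambda _ hXm).aemeasurable hfm.aestronglyMeasurable,
    ← integral_map (measurable_pi_lambda _ hYm).aemeasurable hfm.aestronglyMeasurable,
    hX.map_fun_eq_pi_map fun i => (hXm i).aemeasurable,
    hY.map_fun_eq_pi_map fun i => (hYm i).aemeasurable, hshift, hshift]
  refine sub_le_sub_right (ENNReal.toReal_mono ?_ ?_) C
  · exact ((hint _).add (integrable_const C)).lintegral_lt_top.ne
  · refine Antitone.lintegral_pi_le_of_measure_Iic_le
      (fun x y hxy => ENNReal.ofReal_le_ofReal (by linarith [hf hxy]))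
      (hfm.add_const C).ennreal_ofReal fun i c => ?_
    rw [Measure.map_apply (hXm i) measurableSet_Iic, Measure.map_apply (hYm i) measurableSet_Iic]
    exact hXY i c

lemma measure_setOf_le_le_of_le_ofReal {Ω Ω' : Type*} [MeasurableSpace Ω] [MeasurableSpace Ω']
    {P : Measure Ω} {Q : Measure Ω'} [IsProbabilityMeasure P] [IsProbabilityMeasure Q]
    {X : Ω → ℝ} {U : Ω' → ℝ} (hX0 : ∀ ω, 0 ≤ X ω) (hU1 : ∀ ω, U ω ≤ 1)
    (hX : ∀ x ∈ Icc (0 : ℝ) 1, P {ω | X ω ≤ x} ≤ ENNReal.ofReal x)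
    (hU : ∀ x ∈ Icc (0 : ℝ) 1, Q {ω | U ω ≤ x} = ENNReal.ofReal x) (c : ℝ) :
    P {ω | X ω ≤ c} ≤ Q {ω | U ω ≤ c} := by
  rcases lt_or_ge c 0 with hc0 | hc0
  · have : {ω | X ω ≤ c} = ∅ := eq_empty_of_forall_notMem fun ω h => by
      linarith [hX0 ω, show X ω ≤ c from h]
    simp [this]
  rcases le_or_gt c 1 with hc1 | hc1
  · exact (hX c ⟨hc0, hc1⟩).trans (hU c ⟨hc0, hc1⟩).ge
  · have : {ω | U ω ≤ c} = univ := eq_univ_of_forall fun ω => (hU1 ω).trans hc1.le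
    simp [this, prob_le_one]

lemma numLeNull_le_numLeNull {m m0 : ℕ} {p p' : Fin m → ℝ} {x x' : ℝ}
    (hp : ∀ i : Fin m, (i : ℕ) < m0 → p' i ≤ p i) (hx : x ≤ x') :
    numLeNull m0 p x ≤ numLeNull m0 p' x' :=
  ncard_le_ncard (fun i ⟨hi, hpi⟩ => ⟨hi, (hp i hi).trans (hpi.trans hx)⟩) (toFinite _)

lemma numLeNull_le {m m0 : ℕ} (p : Fin m → ℝ) (x : ℝ) : numLeNull m0 p x ≤ m :=
  (ncard_le_ncard (subset_univ _)).trans (by simp)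

lemma measurable_numLeNull {α : Type*} [MeasurableSpace α] {m m0 : ℕ} {u : α → Fin m → ℝ}
    {x : α → ℝ} (hu : Measurable u) (hx : Measurable x) :
    Measurable fun a => numLeNull m0 (u a) (x a) := by
  classical
  have hcard (a : α) : numLeNull m0 (u a) (x a) =
      ∑ i : Fin m, if (i : ℕ) < m0 ∧ u a i ≤ x a then 1 else 0 := by
    rw [← Finset.card_filter, numLeNull, ← ncard_coe_finset]
    simp
  simp_rw [hcard]
  refine Finset.measurable_sum _ fun i _ => Measurable.ite ?_ measurable_const measurable_const
  by_cases hi : (i : ℕ) < m0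
  · simpa [hi] using measurableSet_le ((measurable_pi_apply i).comp hu) hx
  · simp [hi]

def extendByZero {m0 : ℕ} (m : ℕ) (q : Fin m0 → ℝ) : Fin m → ℝ :=
  fun i => if h : (i : ℕ) < m0 then q ⟨i, h⟩ else 0

lemma extendByZero_mono {m0 : ℕ} (m : ℕ) : Monotone (extendByZero (m0 := m0) m) := by
  intro q q' hq i
  unfold extendByZero
  split_ifs
  exacts [hq _, le_rfl]

lemma measurable_extendByZero {m0 : ℕ} (m : ℕ) : Measurable (extendByZero (m0 := m0) m) := by
  refine measurable_pi_lambda _ fun i => ?_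
  unfold extendByZero
  split_ifs
  exacts [measurable_pi_apply _, measurable_const]

lemma extendByZero_castLE_le {m m0 : ℕ} (h : m0 ≤ m) {u : Fin m → ℝ} (hu : ∀ i, 0 ≤ u i) :
    extendByZero m (fun i => u (Fin.castLE h i)) ≤ u := by
  intro i
  unfold extendByZero
  split_ifs
  exacts [le_rfl, hu i]

lemma extendByZero_castLE_eq {m m0 : ℕ} (h : m0 ≤ m) {u : Fin m → ℝ}
    (hu : ∀ i : Fin m, m0 ≤ (i : ℕ) → u i = 0) :
    extendByZero m (fun i => u (Fin.castLE h i)) = u := by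
  funext i
  unfold extendByZero
  split_ifs with hi
  exacts [rfl, (hu i (not_lt.1 hi)).symm]

lemma IsFM.ae_eq_zero_of_cdf_eq_one {Ω : Type*} [MeasurableSpace Ω] {Q : Measure Ω}
    {m m0 : ℕ} {r : Ω → Fin m → ℝ} (hQ : IsFM Q m m0 (fun _ => 1) r) :
    ∀ᵐ ω ∂Q, ∀ i : Fin m, m0 ≤ (i : ℕ) → r ω i = 0 := by
  obtain ⟨_, hrmeas, -, hrrange, -, hrdirac⟩ := hQ
  refine ae_all_iff.2 fun i => ?_
  by_cases hi : m0 ≤ (i : ℕ)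
  · have h1 : Q {ω | r ω i ≤ 0} = 1 := by simpa using hrdirac i hi 0 (by simp)
    filter_upwards [(mem_ae_iff_prob_eq_one (measurableSet_le (hrmeas i) measurable_const)).2 h1]
      with ω hω _ using le_antisymm hω (hrrange ω i).1
  · exact ae_of_all _ fun ω h => absurd h hi

theorem diracUniform_least_favorable_monotone_criterion_general
    (m m0 : ℕ) (hm0 : m0 ≤ m)
    {Ω Ω' : Type*} [MeasurableSpace Ω] [MeasurableSpace Ω']
    (P : Measure Ω) [IsProbabilityMeasure P] (Q : Measure Ω')
    (p : Ω → Fin m → ℝ) (r : Ω' → Fin m → ℝ)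
    (hmeas : ∀ i, Measurable fun ω => p ω i)
    (hrange : ∀ ω i, p ω i ∈ Set.Icc (0:ℝ) 1)
    (hindep : iIndepFun
      (fun (i : Fin m0) ω => p ω (Fin.castLE hm0 i)) P)
    (hnull : ∀ i : Fin m, (i : ℕ) < m0 → ∀ x ∈ Set.Icc (0:ℝ) 1,
      P {ω | p ω i ≤ x} ≤ ENNReal.ofReal x)
    (tstar : (Fin m → ℝ) → ℝ) (htmeas : Measurable tstar)
    (htanti : ∀ u v : Fin m → ℝ, (∀ i, u i ≤ v i) → tstar v ≤ tstar u)
    (φ : ℕ → ℝ) (hφ : Monotone φ)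
    (hQ : IsFM Q m m0 (fun _ => 1) r) :
    ∫ ω, φ (numLeNull m0 (p ω) (tstar (p ω))) ∂P ≤
      ∫ ω, φ (numLeNull m0 (r ω) (tstar (r ω))) ∂Q := by
  have hr_eq : ∀ᵐ ω ∂Q, extendByZero m (fun i => r ω (Fin.castLE hm0 i)) = r ω := by
    filter_upwards [hQ.ae_eq_zero_of_cdf_eq_one] with ω hω using extendByZero_castLE_eq hm0 hω
  obtain ⟨_, hrmeas, hrindep, hrrange, hrnull, -⟩ := hQ
  set V : (Fin m → ℝ) → ℕ := fun u => numLeNull m0 u (tstar u)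
  have hV : Antitone V := fun u v huv =>
    numLeNull_le_numLeNull (fun i _ => huv i) (htanti u v huv)
  have hφV (u) : ‖φ (V u)‖ ≤ max |φ 0| |φ m| :=
    abs_le_max_abs_abs (hφ (Nat.zero_le _)) (hφ (numLeNull_le _ _))
  have hφVm : Measurable fun u => φ (V u) :=
    measurable_from_nat.comp (measurable_numLeNull measurable_id htmeas)
  have hint {g : Ω → Fin m → ℝ} (hg : Measurable g) : Integrable (fun ω => φ (V (g ω))) P :=
    .of_bound (hφVm.comp hg).aestronglyMeasurable _ (ae_of_all _ fun ω => hφV _)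
  calc ∫ ω, φ (V (p ω)) ∂P
      ≤ ∫ ω, φ (V (extendByZero m fun i => p ω (Fin.castLE hm0 i))) ∂P :=
        integral_mono (hint (measurable_pi_lambda _ hmeas))
          (hint ((measurable_extendByZero m).comp (measurable_pi_lambda _ fun i => hmeas _)))
          fun ω => hφ (hV (extendByZero_castLE_le hm0 fun i => (hrange ω i).1))
    _ ≤ ∫ ω, φ (V (extendByZero m fun i => r ω (Fin.castLE hm0 i))) ∂Q :=
        Antitone.integral_comp_le_of_iIndepFun (fun i => hmeas _) (fun i => hrmeas _) hindep
          (hrindep.precomp (Fin.castLE_injective hm0))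
          (fun i => measure_setOf_le_le_of_le_ofReal (fun ω => (hrange ω _).1)
            (fun ω => (hrrange ω _).2) (hnull _ i.isLt) (hrnull _ i.isLt))
          (fun q q' hq => hφ (hV (extendByZero_mono m hq)))
          (hφVm.comp (measurable_extendByZero m)) fun q => hφV _
    _ = ∫ ω, φ (V (r ω)) ∂Q := integral_congr_ae <| by
        filter_upwards [hr_eq] with ω hω
        rw [hω]

/-- Lemma: the Dirac-uniform configuration `DU(m, m0)` is least favorable for any
nondecreasing criterion `φ` of the number of type I errors of a threshold-based
procedure whose threshold `t*` is nonincreasing in each p-value, when the p-values of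
true nulls are independent and stochastically lower bounded by a uniform variable. -/
theorem diracUniform_least_favorable_monotone_criterion
    (m m0 : ℕ) (hm : 1 ≤ m) (hm0 : m0 ≤ m)
    {Ω Ω' : Type*} [MeasurableSpace Ω] [MeasurableSpace Ω']
    (P : Measure Ω) [IsProbabilityMeasure P] (Q : Measure Ω')
    (p : Ω → Fin m → ℝ) (r : Ω' → Fin m → ℝ)
    (hmeas : ∀ i, Measurable fun ω => p ω i)
    (hrange : ∀ ω i, p ω i ∈ Set.Icc (0:ℝ) 1)
    (hindep : iIndepFun
      (fun (i : Fin m0) ω => p ω (Fin.castLE hm0 i)) P)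
    (hnull : ∀ i : Fin m, (i : ℕ) < m0 → ∀ x ∈ Set.Icc (0:ℝ) 1,
      P {ω | p ω i ≤ x} ≤ ENNReal.ofReal x)
    (tstar : (Fin m → ℝ) → ℝ) (htmeas : Measurable tstar)
    (htanti : ∀ u v : Fin m → ℝ, (∀ i, u i ≤ v i) → tstar v ≤ tstar u)
    (φ : ℕ → ℝ) (hφ : Monotone φ)
    (hQ : IsFM Q m m0 (fun _ => 1) r) :
    ∫ ω, φ (numLeNull m0 (p ω) (tstar (p ω))) ∂P ≤
      ∫ ω, φ (numLeNull m0 (r ω) (tstar (r ω))) ∂Q :=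
  diracUniform_least_favorable_monotone_criterion_general m m0 hm0 P Q p r hmeas hrange hindep hnull
    tstar htmeas htanti φ hφ hQ
end
end

section
/- Let ρ : [0,1] → [0,1] be continuous and nondecreasing, and let t_0 ∈ [0,1]. (a) For every nondecreasing right-continuous G : [0,1] → [0,1], the minimum (respectively maximum) in the definition of U(t_0,G) is attained and U(t_0,G) is a fixed point of G∘ρ, i.e., G(ρ(U(t_0,G))) = U(t_0,G). (b) If G, G' : [0,1] → [0,1] are nondecreasing right-continuous functions with G(x) ≥ G'(x) for all x ∈ [0,1], then U(t_0,G) ≥ U(t_0,G'). -/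
open MeasureTheory ProbabilityTheory Filter
open scoped ENNReal

noncomputable section

/-!
`Ufix ρ t0 G` is a Knaster–Tarski fixed point of the monotone map `G ∘ ρ`: if `t0 ≤ G (ρ t0)`
it is the least pre-fixed point in `[t0, 1]`, and this infimum is fixed because `G ∘ ρ` sends
pre-fixed points to pre-fixed points (dually for the supremum of post-fixed points in `[0, t0]`).
Enlarging `G` shrinks the set of pre-fixed points and enlarges the set of post-fixed points,
and in the mixed case `t0` separates the two values, which gives monotonicity in `G`.
-/

open Function

section

variable {α : Type*} [ConditionallyCompleteLattice α] {f : α → α} {a b : α}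

theorem MonotoneOn.csInf_setOf_map_le_mem_isFixedPt (hf : MonotoneOn f (Set.Icc a b))
    (hab : a ≤ b) (ha : a ≤ f a) (hb : f b ≤ b) :
    sInf {u | u ∈ Set.Icc a b ∧ f u ≤ u} ∈ {u | u ∈ Set.Icc a b ∧ f u ≤ u} ∧
      IsFixedPt f (sInf {u | u ∈ Set.Icc a b ∧ f u ≤ u}) := by
  set S := {u | u ∈ Set.Icc a b ∧ f u ≤ u}
  have hbS : b ∈ S := ⟨⟨hab, le_rfl⟩, hb⟩
  have hbdd : BddBelow S := ⟨a, fun u hu => hu.1.1⟩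
  have hU : sInf S ∈ Set.Icc a b := ⟨le_csInf ⟨b, hbS⟩ fun u hu => hu.1.1, csInf_le hbdd hbS⟩
  have hfU : f (sInf S) ≤ sInf S :=
    le_csInf ⟨b, hbS⟩ fun u hu => (hf hU hu.1 (csInf_le hbdd hu)).trans hu.2
  have hfUS : f (sInf S) ∈ S :=
    have hfU' : f (sInf S) ∈ Set.Icc a b := ⟨ha.trans (hf ⟨le_rfl, hab⟩ hU hU.1), hfU.trans hU.2⟩
    ⟨hfU', hf hfU' hU hfU⟩
  exact ⟨⟨hU, hfU⟩, le_antisymm hfU (csInf_le hbdd hfUS)⟩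

theorem MonotoneOn.csSup_setOf_le_map_mem_isFixedPt (hf : MonotoneOn f (Set.Icc a b))
    (hab : a ≤ b) (ha : a ≤ f a) (hb : f b ≤ b) :
    sSup {u | u ∈ Set.Icc a b ∧ u ≤ f u} ∈ {u | u ∈ Set.Icc a b ∧ u ≤ f u} ∧
      IsFixedPt f (sSup {u | u ∈ Set.Icc a b ∧ u ≤ f u}) := by
  set S := {u | u ∈ Set.Icc a b ∧ u ≤ f u}
  have haS : a ∈ S := ⟨⟨le_rfl, hab⟩, ha⟩
  have hbdd : BddAbove S := ⟨b, fun u hu => hu.1.2⟩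
  have hU : sSup S ∈ Set.Icc a b := ⟨le_csSup hbdd haS, csSup_le ⟨a, haS⟩ fun u hu => hu.1.2⟩
  have hUf : sSup S ≤ f (sSup S) :=
    csSup_le ⟨a, haS⟩ fun u hu => hu.2.trans (hf hu.1 hU (le_csSup hbdd hu))
  have hfUS : f (sSup S) ∈ S :=
    have hfU' : f (sSup S) ∈ Set.Icc a b := ⟨hU.1.trans hUf, (hf hU ⟨hab, le_rfl⟩ hU.2).trans hb⟩
    ⟨hfU', hf hU hfU' hUf⟩
  exact ⟨⟨hU, hUf⟩, le_antisymm (le_csSup hbdd hfUS) hUf⟩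

end

section Ufix

variable {ρ G : ℝ → ℝ} {t0 : ℝ}

theorem Ufix_mem_isFixedPt_of_le (hH : MonotoneOn (fun u => G (ρ u)) (Set.Icc 0 1))
    (hH1 : G (ρ 1) ≤ 1) (ht0 : t0 ∈ Set.Icc (0:ℝ) 1) (h : t0 ≤ G (ρ t0)) :
    Ufix ρ t0 G ∈ {u | u ∈ Set.Icc t0 1 ∧ G (ρ u) ≤ u} ∧
      IsFixedPt (fun u => G (ρ u)) (Ufix ρ t0 G) := by
  rw [Ufix, if_pos h]
  exact (hH.mono (Set.Icc_subset_Icc_left ht0.1)).csInf_setOf_map_le_mem_isFixedPt ht0.2 h hH1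

theorem Ufix_mem_isFixedPt_of_lt (hH : MonotoneOn (fun u => G (ρ u)) (Set.Icc 0 1))
    (hH0 : 0 ≤ G (ρ 0)) (ht0 : t0 ∈ Set.Icc (0:ℝ) 1) (h : G (ρ t0) < t0) :
    Ufix ρ t0 G ∈ {u | u ∈ Set.Icc 0 t0 ∧ u ≤ G (ρ u)} ∧
      IsFixedPt (fun u => G (ρ u)) (Ufix ρ t0 G) := by
  rw [Ufix, if_neg h.not_ge]
  exact (hH.mono (Set.Icc_subset_Icc_right ht0.2)).csSup_setOf_le_map_mem_isFixedPt ht0.1 hH0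
    h.le

theorem Ufix_mono {G' : ℝ → ℝ} (hH1 : G (ρ 1) ≤ 1) (ht0 : t0 ∈ Set.Icc (0:ℝ) 1)
    (hle : ∀ u ∈ Set.Icc (0:ℝ) 1, G' (ρ u) ≤ G (ρ u)) : Ufix ρ t0 G' ≤ Ufix ρ t0 G := by
  have h1 : (1:ℝ) ∈ {u | u ∈ Set.Icc t0 1 ∧ G (ρ u) ≤ u} := ⟨⟨ht0.2, le_rfl⟩, hH1⟩
  by_cases h' : t0 ≤ G' (ρ t0)
  · rw [Ufix, Ufix, if_pos h', if_pos (h'.trans (hle t0 ht0))]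
    exact csInf_le_csInf ⟨t0, fun u hu => hu.1.1⟩ ⟨1, h1⟩ fun u hu =>
      ⟨hu.1, (hle u ⟨ht0.1.trans hu.1.1, hu.1.2⟩).trans hu.2⟩
  -- `Real.sSup_le` rather than `csSup_le`: the set for `G'` may be empty, with `sSup ∅ = 0`.
  by_cases h : t0 ≤ G (ρ t0)
  · rw [Ufix, Ufix, if_neg h', if_pos h]
    exact (Real.sSup_le (fun u hu => hu.1.2) ht0.1).trans (le_csInf ⟨1, h1⟩ fun u hu => hu.1.1)
  · rw [Ufix, Ufix, if_neg h', if_neg h]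
    have hbdd : BddAbove {u | u ∈ Set.Icc 0 t0 ∧ u ≤ G (ρ u)} := ⟨t0, fun u hu => hu.1.2⟩
    exact Real.sSup_le
      (fun u hu => le_csSup hbdd ⟨hu.1, hu.2.trans (hle u ⟨hu.1.1, hu.1.2.trans ht0.2⟩)⟩)
      (Real.sSup_nonneg fun u hu => hu.1.1)

end Ufix

theorem ufix_attained_fixedPoint_monotone_general
    (ρ : ℝ → ℝ)
    (hρmono : MonotoneOn ρ (Set.Icc 0 1))
    (hρmap : ∀ x ∈ Set.Icc (0:ℝ) 1, ρ x ∈ Set.Icc (0:ℝ) 1)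
    (t0 : ℝ) (ht0 : t0 ∈ Set.Icc (0:ℝ) 1)
    (G G' : ℝ → ℝ)
    (hGmono : MonotoneOn G (Set.Icc 0 1))
    (hGmap : ∀ x ∈ Set.Icc (0:ℝ) 1, G x ∈ Set.Icc (0:ℝ) 1) :
    ((t0 ≤ G (ρ t0) →
        Ufix ρ t0 G ∈ {u | u ∈ Set.Icc t0 1 ∧ G (ρ u) ≤ u}) ∧
      (G (ρ t0) < t0 →
        Ufix ρ t0 G ∈ {u | u ∈ Set.Icc 0 t0 ∧ u ≤ G (ρ u)}) ∧
      G (ρ (Ufix ρ t0 G)) = Ufix ρ t0 G) ∧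
    ((∀ x ∈ Set.Icc (0:ℝ) 1, G' x ≤ G x) → Ufix ρ t0 G' ≤ Ufix ρ t0 G) := by
  have hH : MonotoneOn (fun u => G (ρ u)) (Set.Icc 0 1) := hGmono.comp hρmono hρmap
  have hH1 : G (ρ 1) ≤ 1 := (hGmap _ (hρmap 1 ⟨zero_le_one, le_rfl⟩)).2
  have hH0 : 0 ≤ G (ρ 0) := (hGmap _ (hρmap 0 ⟨le_rfl, zero_le_one⟩)).1
  refine ⟨⟨fun h => (Ufix_mem_isFixedPt_of_le hH hH1 ht0 h).1,
    fun h => (Ufix_mem_isFixedPt_of_lt hH hH0 ht0 h).1, ?_⟩,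
    fun hle => Ufix_mono hH1 ht0 fun u hu => hle _ (hρmap u hu)⟩
  rcases le_or_gt t0 (G (ρ t0)) with h | h
  · exact (Ufix_mem_isFixedPt_of_le hH hH1 ht0 h).2
  · exact (Ufix_mem_isFixedPt_of_lt hH hH0 ht0 h).2

/-- Properties of `𝒰(t0, G)`: (a) for a nondecreasing right-continuous `G`, the
minimum (resp. maximum) defining `𝒰(t0, G)` is attained and `𝒰(t0, G)` is a fixed
point of `G ∘ ρ`; (b) `𝒰(t0, ·)` is monotone: if `G' ≤ G` pointwise on `[0,1]`,
then `𝒰(t0, G') ≤ 𝒰(t0, G)`. -/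
theorem ufix_attained_fixedPoint_monotone
    (ρ : ℝ → ℝ) (hρcont : ContinuousOn ρ (Set.Icc 0 1))
    (hρmono : MonotoneOn ρ (Set.Icc 0 1))
    (hρmap : ∀ x ∈ Set.Icc (0:ℝ) 1, ρ x ∈ Set.Icc (0:ℝ) 1)
    (t0 : ℝ) (ht0 : t0 ∈ Set.Icc (0:ℝ) 1)
    (G G' : ℝ → ℝ)
    (hGmono : MonotoneOn G (Set.Icc 0 1))
    (hGmap : ∀ x ∈ Set.Icc (0:ℝ) 1, G x ∈ Set.Icc (0:ℝ) 1)
    (hGrc : ∀ x ∈ Set.Ico (0:ℝ) 1, ContinuousWithinAt G (Set.Ici x) x)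
    (hG'mono : MonotoneOn G' (Set.Icc 0 1))
    (hG'map : ∀ x ∈ Set.Icc (0:ℝ) 1, G' x ∈ Set.Icc (0:ℝ) 1)
    (hG'rc : ∀ x ∈ Set.Ico (0:ℝ) 1, ContinuousWithinAt G' (Set.Ici x) x) :
    ((t0 ≤ G (ρ t0) →
        Ufix ρ t0 G ∈ {u | u ∈ Set.Icc t0 1 ∧ G (ρ u) ≤ u}) ∧
      (G (ρ t0) < t0 →
        Ufix ρ t0 G ∈ {u | u ∈ Set.Icc 0 t0 ∧ u ≤ G (ρ u)}) ∧
      G (ρ (Ufix ρ t0 G)) = Ufix ρ t0 G) ∧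
    ((∀ x ∈ Set.Icc (0:ℝ) 1, G' x ≤ G x) → Ufix ρ t0 G' ≤ Ufix ρ t0 G) :=
  ufix_attained_fixedPoint_monotone_general ρ hρmono hρmap t0 ht0 G G' hGmono hGmap
end
end

section
/- Let α ∈ (0,1), ρ(x) = αx, ζ ∈ (0,1), δ ∈ (0,1), and G^{DU}_ζ(x) = (1−ζ) + ζx. Then for every t_0 ∈ [0,1]: u⁺_δ := U(t_0, (G^{DU}_ζ + δ) ∧ 1) = min( (1−ζ+δ)/(1−αζ), 1 ) and u⁻_δ := U(t_0, (G^{DU}_ζ − δ) ∨ 0) = max( (1−ζ−δ)/(1−αζ), 0 ), and consequently (ρ(u⁺_δ) − ρ(u⁻_δ))/u⁺_δ ≤ 2αδ/(1−ζ+δ). -/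
open MeasureTheory ProbabilityTheory Filter
open scoped ENNReal

noncomputable section

/-! With `ρ(x) = αx`, both `G ∘ ρ` are affine maps of slope `αζ < 1`, truncated to `[0,1]`, so
each crosses the diagonal exactly once, and from either side of it `𝒰(t₀, G)` finds that crossing.
Truncation can only raise the ratio `u⁻/u⁺` above its untruncated value `(1-ζ-δ)/(1-ζ+δ)`,
which gives the bound. -/

lemma Ufix_eq_of_iff {ρ G : ℝ → ℝ} {us : ℝ} (t0 : ℝ) (h0 : 0 ≤ us) (h1 : us ≤ 1)
    (hle : ∀ u, G (ρ u) ≤ u ↔ us ≤ u) (hge : ∀ u, u ≤ G (ρ u) ↔ u ≤ us) :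
    Ufix ρ t0 G = us := by
  unfold Ufix
  split_ifs with h
  · have hset : {u | u ∈ Set.Icc t0 1 ∧ G (ρ u) ≤ u} = Set.Icc us 1 := by
      ext u
      simp only [Set.mem_ofPred_eq, Set.mem_Icc, hle u]
      exact ⟨fun ⟨⟨_, hu1⟩, hu⟩ => ⟨hu, hu1⟩,
        fun ⟨hu, hu1⟩ => ⟨⟨((hge t0).1 h).trans hu, hu1⟩, hu⟩⟩
    rw [hset, csInf_Icc h1]
  · have hset : {u | u ∈ Set.Icc 0 t0 ∧ u ≤ G (ρ u)} = Set.Icc 0 us := by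
      ext u
      simp only [Set.mem_ofPred_eq, Set.mem_Icc, hge u]
      exact ⟨fun ⟨⟨hu0, _⟩, hu⟩ => ⟨hu0, hu⟩,
        fun ⟨hu0, hu⟩ => ⟨⟨hu0, hu.trans (not_le.1 (mt (hge t0).2 h)).le⟩, hu⟩⟩
    rw [hset, csSup_Icc h0]

section Affine

variable {c k u : ℝ}

lemma affine_le_self_iff (hk : k < 1) : c + k * u ≤ u ↔ c / (1 - k) ≤ u := by
  rw [div_le_iff₀ (sub_pos.2 hk)]
  constructor <;> intro h <;> linarith

lemma self_le_affine_iff (hk : k < 1) : u ≤ c + k * u ↔ u ≤ c / (1 - k) := by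
  rw [le_div_iff₀ (sub_pos.2 hk)]
  constructor <;> intro h <;> linarith

end Affine

lemma Ufix_eq_min_of_affine {ρ G : ℝ → ℝ} {c k : ℝ} (t0 : ℝ) (hk : k < 1) (hc : 0 ≤ c)
    (hG : ∀ u, G (ρ u) = min (c + k * u) 1) :
    Ufix ρ t0 G = min (c / (1 - k)) 1 :=
  Ufix_eq_of_iff t0 (le_min (div_nonneg hc (sub_pos.2 hk).le) zero_le_one) (min_le_right _ _)
    (fun u => by simp only [hG, min_le_iff, affine_le_self_iff hk])
    (fun u => by simp only [hG, le_min_iff, self_le_affine_iff hk])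

lemma Ufix_eq_max_of_affine {ρ G : ℝ → ℝ} {c k : ℝ} (t0 : ℝ) (hk : k < 1) (hc : c ≤ 1 - k)
    (hG : ∀ u, G (ρ u) = max (c + k * u) 0) :
    Ufix ρ t0 G = max (c / (1 - k)) 0 :=
  Ufix_eq_of_iff t0 (le_max_right _ _) (max_le ((div_le_one (sub_pos.2 hk)).2 hc) zero_le_one)
    (fun u => by simp only [hG, max_le_iff, affine_le_self_iff hk])
    (fun u => by simp only [hG, le_max_iff, self_le_affine_iff hk])

lemma div_le_max_div_min {u v : ℝ} (hu : 0 < u) : v / u ≤ max v 0 / min u 1 := by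
  rcases le_or_gt v 0 with hv | hv
  · exact (div_nonpos_of_nonpos_of_nonneg hv hu.le).trans
      (div_nonneg (le_max_right _ _) (le_min hu.le zero_le_one))
  · rw [max_eq_left hv.le]
    exact div_le_div_of_nonneg_left hv.le (lt_min hu one_pos) (min_le_left _ _)

theorem uPlus_uMinus_linear_general
    (α ζ δ : ℝ) (hα : α ∈ Set.Ioo (0:ℝ) 1) (hζ : ζ ∈ Set.Ioo (0:ℝ) 1)
    (hδ : δ ∈ Set.Ioo (0:ℝ) 1) (t0 : ℝ) :
    uPlusDU (fun x => α * x) t0 ζ δ = min ((1 - ζ + δ) / (1 - α * ζ)) 1 ∧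
    uMinusDU (fun x => α * x) t0 ζ δ = max ((1 - ζ - δ) / (1 - α * ζ)) 0 ∧
    (α * uPlusDU (fun x => α * x) t0 ζ δ - α * uMinusDU (fun x => α * x) t0 ζ δ) /
        uPlusDU (fun x => α * x) t0 ζ δ ≤
      2 * α * δ / (1 - ζ + δ) := by
  obtain ⟨hα0, hα1⟩ := hα
  obtain ⟨hζ0, hζ1⟩ := hζ
  obtain ⟨hδ0, -⟩ := hδ
  have hk : α * ζ < 1 := by nlinarith
  have hA : 0 < 1 - α * ζ := sub_pos.2 hk
  have hD : 0 < 1 - ζ + δ := by linarith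
  have hplus : uPlusDU (fun x => α * x) t0 ζ δ = min ((1 - ζ + δ) / (1 - α * ζ)) 1 :=
    Ufix_eq_min_of_affine t0 hk hD.le fun u => by ring_nf
  have hminus : uMinusDU (fun x => α * x) t0 ζ δ = max ((1 - ζ - δ) / (1 - α * ζ)) 0 :=
    Ufix_eq_max_of_affine t0 hk (by nlinarith) fun u => by ring_nf
  refine ⟨hplus, hminus, ?_⟩
  rw [hplus, hminus]
  set up := min ((1 - ζ + δ) / (1 - α * ζ)) 1
  have hup : 0 < up := lt_min (div_pos hD hA) one_pos
  have hratio : (1 - ζ - δ) / (1 - ζ + δ) ≤ max ((1 - ζ - δ) / (1 - α * ζ)) 0 / up := by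
    rw [← div_div_div_cancel_right₀ hA.ne']
    exact div_le_max_div_min (div_pos hD hA)
  calc (α * up - α * max ((1 - ζ - δ) / (1 - α * ζ)) 0) / up
      = α * (1 - max ((1 - ζ - δ) / (1 - α * ζ)) 0 / up) := by field_simp
    _ ≤ α * (1 - (1 - ζ - δ) / (1 - ζ + δ)) := by gcongr
    _ = 2 * α * δ / (1 - ζ + δ) := by field_simp; ring

/-- Explicit computation of `u⁺_δ` and `u⁻_δ` for the linear critical value function
`ρ(x) = αx`, and the resulting bound `(ρ(u⁺_δ) - ρ(u⁻_δ))/u⁺_δ ≤ 2αδ/(1-ζ+δ)`. -/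
theorem uPlus_uMinus_linear
    (α ζ δ : ℝ) (hα : α ∈ Set.Ioo (0:ℝ) 1) (hζ : ζ ∈ Set.Ioo (0:ℝ) 1)
    (hδ : δ ∈ Set.Ioo (0:ℝ) 1) (t0 : ℝ) (ht0 : t0 ∈ Set.Icc (0:ℝ) 1) :
    uPlusDU (fun x => α * x) t0 ζ δ = min ((1 - ζ + δ) / (1 - α * ζ)) 1 ∧
    uMinusDU (fun x => α * x) t0 ζ δ = max ((1 - ζ - δ) / (1 - α * ζ)) 0 ∧
    (α * uPlusDU (fun x => α * x) t0 ζ δ - α * uMinusDU (fun x => α * x) t0 ζ δ) /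
        uPlusDU (fun x => α * x) t0 ζ δ ≤
      2 * α * δ / (1 - ζ + δ) :=
  uPlus_uMinus_linear_general α ζ δ hα hζ hδ t0
end
end
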